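/- arXiv:1910.14434 — 4 statements merged into one kernel-verified Lean document; each statement's English description precedes it below -/
import Mathlib

section
/- Let X be a locally compact Hausdorff topological space and μ a Radon measure on X whose support is all of X (every nonempty open set has positive measure). Let φ : X × X → ℂ be a continuous function. Then φ is a positive definite kernel if and only if for every continuous compactly supported function ξ : X → ℂ, the double integral ∫_X ∫_X φ(x, y) * conj (ξ x) * ξ y dμ(x) dμ(y) is a nonnegative real number. -/
/-!
Both directions compare the double integral with finite sums. If `ξ = ∑ vᵢ` and `φ` stays within
`ε` of `φ (aᵢ, aⱼ)` on `supp vᵢ × supp vⱼ`, the double integral of `ξ` lies within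
`ε (∑ ‖vᵢ‖₁)²` of `∑ cᵢ conj cⱼ φ (aᵢ, aⱼ)` with `cᵢ = conj (∫ vᵢ)`. For the forward direction the
`vᵢ` are `ξ` cut up by a partition of unity subordinate to a fine cover of `supp ξ`, so that
`∑ ‖vᵢ‖₁ = ‖ξ‖₁`. For the converse `vᵢ = conj cᵢ ψᵢ` with `ψᵢ ≥ 0` a bump of integral one near
`aᵢ`, which exists because `μ` charges every nonempty open set. As the nonnegative reals are closed
in `ℂ`, letting `ε → 0` transfers nonnegativity in both directions.
-/

open MeasureTheory Filter Topology Set ComplexConjugate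
open scoped ComplexOrder

lemma Complex.nonneg_of_forall_exists_nonneg_norm_sub_le {z : ℂ} {C : ℝ}
    (h : ∀ ε > 0, ∃ w : ℂ, 0 ≤ w ∧ ‖z - w‖ ≤ ε * C) : 0 ≤ z := by
  suffices z ∈ closure (Ici 0) from isClosed_Ici.closure_subset this
  refine Metric.mem_closure_iff.2 fun δ hδ => ?_
  obtain ⟨w, hw, hzw⟩ := h (δ / (|C| + 1)) (by positivity)
  refine ⟨w, hw, lt_of_le_of_lt (dist_eq_norm z w ▸ hzw) ?_⟩
  calc δ / (|C| + 1) * C ≤ δ / (|C| + 1) * |C| := by gcongr; exact le_abs_self C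
    _ < δ / (|C| + 1) * (|C| + 1) := by gcongr; linarith
    _ = δ := div_mul_cancel₀ δ (by positivity)

lemma IsCompact.exists_fin_subcover {X : Type*} [TopologicalSpace X] {K : Set X}
    (hK : IsCompact K) (U : X → Set X) (hU : ∀ x ∈ K, U x ∈ 𝓝 x) :
    ∃ (n : ℕ) (a : Fin n → X), (∀ k, a k ∈ K) ∧ K ⊆ ⋃ k, U (a k) := by
  obtain ⟨t, htK, hKt⟩ := hK.elim_nhds_subcover U hU
  refine ⟨t.card, fun k => t.equivFin.symm k, fun k => htK _ (t.equivFin.symm k).2, ?_⟩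
  intro x hx
  obtain ⟨p, hp, hxp⟩ := mem_iUnion₂.1 (hKt hx)
  exact mem_iUnion.2 ⟨t.equivFin ⟨p, hp⟩, by simpa using hxp⟩

section RCLike

variable {X 𝕜 : Type*} [MeasurableSpace X] {μ : Measure X} [RCLike 𝕜]

lemma norm_integral_mul_sub_le {f g : X → 𝕜} (hfg : Integrable (fun y => f y * g y) μ)
    (hg : Integrable g μ) (z : 𝕜) {ε : ℝ} (h : ∀ y, g y ≠ 0 → ‖f y - z‖ ≤ ε) :
    ‖(∫ y, f y * g y ∂μ) - z * ∫ y, g y ∂μ‖ ≤ ε * ∫ y, ‖g y‖ ∂μ := by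
  have hpt : ∀ y, ‖(f y - z) * g y‖ ≤ ε * ‖g y‖ := fun y => by
    by_cases hy : g y = 0
    · simp [hy]
    · rw [norm_mul]; gcongr; exact h y hy
  calc ‖(∫ y, f y * g y ∂μ) - z * ∫ y, g y ∂μ‖ = ‖∫ y, (f y - z) * g y ∂μ‖ := by
        simp_rw [sub_mul, integral_sub hfg (hg.const_mul z), integral_const_mul]
    _ ≤ ε * ∫ y, ‖g y‖ ∂μ := by
        rw [← integral_const_mul]
        exact norm_integral_le_of_norm_le (hg.norm.const_mul ε) (ae_of_all _ hpt)

lemma integral_integral_mul_conj_mul (φ : X → X → 𝕜) (ξ : X → 𝕜) :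
    ∫ x, ∫ y, φ x y * conj (ξ x) * ξ y ∂μ ∂μ = ∫ x, (∫ y, φ x y * ξ y ∂μ) * conj (ξ x) ∂μ := by
  simp_rw [mul_right_comm _ (conj (ξ _)), integral_mul_const]

end RCLike

section Kernel

variable {X : Type*} [TopologicalSpace X] {φ : X → X → ℂ}

lemma exists_isOpen_forall_norm_kernel_sub_lt (hφ : Continuous fun p : X × X => φ p.1 p.2)
    {K : Set X} (hK : IsCompact K) (p : X) {ε : ℝ} (hε : 0 < ε) :
    ∃ U, IsOpen U ∧ p ∈ U ∧ ∀ x ∈ U, ∀ y ∈ K, ‖φ x y - φ p y‖ < ε ∧ ‖φ y x - φ y p‖ < ε := by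
  set P : X → X → Prop := fun x y => ‖φ x y - φ p y‖ < ε ∧ ‖φ y x - φ y p‖ < ε
  have hnear : ∀ y ∈ K, ∀ᶠ q : X × X in 𝓝 (p, y), P q.1 q.2 := by
    intro y _
    have h₁ : Continuous fun q : X × X => ‖φ q.1 q.2 - φ p q.2‖ := by fun_prop
    have h₂ : Continuous fun q : X × X => ‖φ q.2 q.1 - φ q.2 p‖ := by fun_prop
    exact (h₁.continuousAt.eventually_lt continuousAt_const (by simpa using hε)).and
      (h₂.continuousAt.eventually_lt continuousAt_const (by simpa using hε))
  obtain ⟨U, hU, hUo, hpU⟩ :=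
    eventually_nhds_iff.1 (hK.eventually_forall_of_forall_eventually hnear)
  exact ⟨U, hUo, hpU, hU⟩

lemma exists_nhds_norm_kernel_sub_lt (hφ : Continuous fun p : X × X => φ p.1 p.2)
    {K : Set X} (hK : IsCompact K) {ε : ℝ} (hε : 0 < ε) :
    ∃ U : X → Set X, (∀ p, IsOpen (U p) ∧ p ∈ U p) ∧
      ∀ p ∈ K, ∀ q, ∀ x ∈ U p, ∀ y ∈ U q ∩ K, ‖φ x y - φ p q‖ < ε := by
  choose U hUo hpU hU using
    fun p => exists_isOpen_forall_norm_kernel_sub_lt hφ hK p (half_pos hε)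
  refine ⟨U, fun p => ⟨hUo p, hpU p⟩, fun p hp q x hx y ⟨hyq, hyK⟩ => ?_⟩
  calc ‖φ x y - φ p q‖ ≤ ‖φ x y - φ p y‖ + ‖φ p y - φ p q‖ := norm_sub_le_norm_sub_add_norm_sub ..
    _ < ε / 2 + ε / 2 := add_lt_add (hU p x hx y hyK).1 (hU q y hyq p hp).2
    _ = ε := add_halves ε

end Kernel

section Integral

variable {X : Type*} [TopologicalSpace X] [MeasurableSpace X] [OpensMeasurableSpace X]
  {μ : Measure X} [IsFiniteMeasureOnCompacts μ] {φ : X → X → ℂ}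

lemma continuous_integral_kernel_mul (hφ : Continuous fun p : X × X => φ p.1 p.2) {v : X → ℂ}
    (hv : Continuous v) (hvK : HasCompactSupport v) :
    Continuous fun x => ∫ y, φ x y * v y ∂μ := by
  refine continuousOn_univ.1 (continuousOn_integral_of_compact_support hvK ?_ ?_)
  · exact (hφ.mul (hv.comp continuous_snd)).continuousOn
  · intro _ y _ hy
    simp [image_eq_zero_of_notMem_tsupport hy]

lemma integrable_kernel_mul (hφ : Continuous fun p : X × X => φ p.1 p.2) (x : X) {v : X → ℂ}
    (hv : Continuous v) (hvK : HasCompactSupport v) :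
    Integrable (fun y => φ x y * v y) μ :=
  ((hφ.comp (Continuous.prodMk_right x)).mul hv).integrable_of_hasCompactSupport hvK.mul_left

lemma integrable_integral_kernel_mul_mul (hφ : Continuous fun p : X × X => φ p.1 p.2)
    {u v : X → ℂ} (hu : Continuous u) (huK : HasCompactSupport u) (hv : Continuous v)
    (hvK : HasCompactSupport v) :
    Integrable (fun x => (∫ y, φ x y * v y ∂μ) * u x) μ :=
  ((continuous_integral_kernel_mul hφ hv hvK).mul hu).integrable_of_hasCompactSupport
    huK.mul_left

lemma norm_integral_kernel_sub_le (hφ : Continuous fun p : X × X => φ p.1 p.2)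
    {u v : X → ℂ} (hu : Continuous u) (huK : HasCompactSupport u) (hv : Continuous v)
    (hvK : HasCompactSupport v) (z : ℂ) {ε : ℝ}
    (h : ∀ x y, u x ≠ 0 → v y ≠ 0 → ‖φ x y - z‖ ≤ ε) :
    ‖(∫ x, (∫ y, φ x y * v y ∂μ) * u x ∂μ) - z * (∫ y, v y ∂μ) * ∫ x, u x ∂μ‖
      ≤ ε * (∫ y, ‖v y‖ ∂μ) * ∫ x, ‖u x‖ ∂μ :=
  norm_integral_mul_sub_le (integrable_integral_kernel_mul_mul hφ hu huK hv hvK)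
    (hu.integrable_of_hasCompactSupport huK) _ fun x hx =>
      norm_integral_mul_sub_le (integrable_kernel_mul hφ x hv hvK)
        (hv.integrable_of_hasCompactSupport hvK) z fun y hy => h x y hx hy

lemma integral_kernel_sum_mul_sum (hφ : Continuous fun p : X × X => φ p.1 p.2) {ι : Type*}
    [Fintype ι] {u v : ι → X → ℂ} (hu : ∀ i, Continuous (u i))
    (huK : ∀ i, HasCompactSupport (u i)) (hv : ∀ j, Continuous (v j))
    (hvK : ∀ j, HasCompactSupport (v j)) :
    ∫ x, (∫ y, φ x y * ∑ j, v j y ∂μ) * ∑ i, u i x ∂μ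
      = ∑ j, ∑ i, ∫ x, (∫ y, φ x y * v j y ∂μ) * u i x ∂μ := by
  have hinner : ∀ x, ∫ y, φ x y * ∑ j, v j y ∂μ = ∑ j, ∫ y, φ x y * v j y ∂μ := fun x => by
    simp_rw [Finset.mul_sum]
    exact integral_finsetSum _ fun j _ => integrable_kernel_mul hφ x (hv j) (hvK j)
  simp_rw [hinner, Finset.sum_mul_sum]
  rw [integral_finsetSum _ fun j _ => integrable_finsetSum _ fun i _ =>
    integrable_integral_kernel_mul_mul hφ (hu i) (huK i) (hv j) (hvK j)]
  exact Finset.sum_congr rfl fun j _ => integral_finsetSum _ fun i _ =>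
    integrable_integral_kernel_mul_mul hφ (hu i) (huK i) (hv j) (hvK j)

lemma norm_integral_kernel_sub_sum_le (hφ : Continuous fun p : X × X => φ p.1 p.2) {ι : Type*}
    [Fintype ι] {v : ι → X → ℂ} (hv : ∀ i, Continuous (v i))
    (hvK : ∀ i, HasCompactSupport (v i)) {ξ : X → ℂ} (hξ : ∀ x, ∑ i, v i x = ξ x) (a : ι → X)
    {ε : ℝ} (h : ∀ i j x y, v i x ≠ 0 → v j y ≠ 0 → ‖φ x y - φ (a i) (a j)‖ ≤ ε) :
    ‖(∫ x, ∫ y, φ x y * conj (ξ x) * ξ y ∂μ ∂μ)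
        - ∑ i, ∑ j, conj (∫ x, v i x ∂μ) * (∫ y, v j y ∂μ) * φ (a i) (a j)‖
      ≤ ε * (∑ i, ∫ x, ‖v i x‖ ∂μ) ^ 2 := by
  set u : ι → X → ℂ := fun i x => conj (v i x)
  have hu : ∀ i, Continuous (u i) := fun i => (hv i).star
  have huK : ∀ i, HasCompactSupport (u i) := fun i => (hvK i).comp_left (map_zero _)
  have hdecomp : ∫ x, ∫ y, φ x y * conj (ξ x) * ξ y ∂μ ∂μ
      = ∑ j, ∑ i, ∫ x, (∫ y, φ x y * v j y ∂μ) * u i x ∂μ := by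
    rw [integral_integral_mul_conj_mul, ← integral_kernel_sum_mul_sum hφ hu huK hv hvK]
    simp_rw [u, ← map_sum, hξ]
  have hmain : ∑ i, ∑ j, conj (∫ x, v i x ∂μ) * (∫ y, v j y ∂μ) * φ (a i) (a j)
      = ∑ j, ∑ i, φ (a i) (a j) * (∫ y, v j y ∂μ) * ∫ x, u i x ∂μ := by
    rw [Finset.sum_comm]
    simp_rw [u, integral_conj]
    exact Finset.sum_congr rfl fun _ _ => Finset.sum_congr rfl fun _ _ => by ring
  have hnorm : ∀ i, ∫ x, ‖u i x‖ ∂μ = ∫ x, ‖v i x‖ ∂μ := fun i => by simp [u]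
  rw [hdecomp, hmain, ← Finset.sum_sub_distrib]
  calc _ ≤ ∑ j, ∑ i, ε * (∫ y, ‖v j y‖ ∂μ) * ∫ x, ‖u i x‖ ∂μ := by
        refine (norm_sum_le _ _).trans (Finset.sum_le_sum fun j _ => ?_)
        rw [← Finset.sum_sub_distrib]
        refine (norm_sum_le _ _).trans (Finset.sum_le_sum fun i _ => ?_)
        refine norm_integral_kernel_sub_le hφ (hu i) (huK i) (hv j) (hvK j) _ fun x y hx hy => ?_
        exact h i j x y (by simpa [u] using hx) hy
    _ = ε * (∑ i, ∫ x, ‖v i x‖ ∂μ) ^ 2 := by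
        simp_rw [hnorm, sq, Finset.sum_mul_sum, Finset.mul_sum, mul_assoc]

end Integral

lemma IsOpen.exists_continuous_integral_eq_one {X : Type*} [TopologicalSpace X] [RegularSpace X]
    [LocallyCompactSpace X] [MeasurableSpace X] [OpensMeasurableSpace X] {μ : Measure X}
    [IsFiniteMeasureOnCompacts μ] [μ.IsOpenPosMeasure] {U : Set X} (hU : IsOpen U) {p : X}
    (hp : p ∈ U) :
    ∃ ψ : X → ℝ, Continuous ψ ∧ HasCompactSupport ψ ∧ 0 ≤ ψ ∧ Function.support ψ ⊆ U ∧
      ∫ x, ψ x ∂μ = 1 := by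
  obtain ⟨f, hf1, hf0, hfK, hf01⟩ := exists_continuous_one_zero_of_isCompact isCompact_singleton
    hU.isClosed_compl (disjoint_singleton_left.2 (not_not.2 hp))
  have hpos : 0 < ∫ x, f x ∂μ := f.continuous.integral_pos_of_hasCompactSupport_nonneg_nonzero
    hfK (fun x => (hf01 x).1) (x := p) (by simp [hf1 rfl])
  refine ⟨fun x => (∫ x, f x ∂μ)⁻¹ * f x, continuous_const.mul f.continuous, hfK.mul_left,
    fun x => mul_nonneg (inv_nonneg.2 hpos.le) (hf01 x).1, fun x hx => ?_, ?_⟩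
  · by_contra hxU
    exact hx (by simp [hf0 hxU])
  · rw [integral_const_mul, inv_mul_cancel₀ hpos.ne']

-- `0 ≤ z` in `ComplexOrder` means that `z` is a nonnegative real number.
def IsPosDefKernel {X : Type*} (φ : X → X → ℂ) : Prop :=
  ∀ (n : ℕ) (c : Fin n → ℂ) (x : Fin n → X), 0 ≤ ∑ i, ∑ j, c i * conj (c j) * φ (x i) (x j)

def IsIntegrallyPosDefKernel {X : Type*} [TopologicalSpace X] [MeasurableSpace X]
    (μ : Measure X) (φ : X → X → ℂ) : Prop :=
  ∀ ξ : X → ℂ, Continuous ξ → HasCompactSupport ξ →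
    0 ≤ ∫ x, ∫ y, φ x y * conj (ξ x) * ξ y ∂μ ∂μ

section PosDef

variable {X : Type*} [TopologicalSpace X] [T2Space X] [LocallyCompactSpace X] [MeasurableSpace X]
  [OpensMeasurableSpace X] {μ : Measure X} [IsFiniteMeasureOnCompacts μ] {φ : X → X → ℂ}

theorem IsPosDefKernel.isIntegrallyPosDefKernel (hφ : Continuous fun p : X × X => φ p.1 p.2)
    (hpd : IsPosDefKernel φ) : IsIntegrallyPosDefKernel μ φ := by
  intro ξ hξ hξK
  refine Complex.nonneg_of_forall_exists_nonneg_norm_sub_le (C := (∫ x, ‖ξ x‖ ∂μ) ^ 2)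
    fun ε hε => ?_
  obtain ⟨U, hU, hUε⟩ := exists_nhds_norm_kernel_sub_lt hφ hξK hε
  obtain ⟨n, a, haK, hKa⟩ := hξK.exists_fin_subcover U fun p _ => (hU p).1.mem_nhds (hU p).2
  obtain ⟨ψ, hψU, hψ1, hψ01, hψK⟩ :=
    exists_continuous_sum_one_of_isOpen_isCompact (fun k => (hU (a k)).1) hξK hKa
  have hpart : ∀ x, ξ x ≠ 0 → ∑ k, ψ k x = 1 := fun x hx => by
    simpa using hψ1 (subset_tsupport ξ hx)
  set v : Fin n → X → ℂ := fun k x => ψ k x * ξ x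
  have hv : ∀ k, Continuous (v k) := fun k => by fun_prop
  have hvK : ∀ k, HasCompactSupport (v k) := fun k => hξK.mul_left
  have hsum : ∀ x, ∑ k, v k x = ξ x := fun x => by
    by_cases hx : ξ x = 0
    · simp [v, hx]
    · rw [← Finset.sum_mul, ← Complex.ofReal_sum, hpart x hx, Complex.ofReal_one, one_mul]
  have hnorm : ∑ k, ∫ x, ‖v k x‖ ∂μ = ∫ x, ‖ξ x‖ ∂μ := by
    rw [← integral_finsetSum _ fun k _ => ((hv k).integrable_of_hasCompactSupport (hvK k)).norm]
    refine integral_congr_ae (ae_of_all _ fun x => ?_)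
    by_cases hx : ξ x = 0
    · simp [v, hx]
    · simp_rw [v, norm_mul, Complex.norm_real, Real.norm_of_nonneg (hψ01 _ x).1, ← Finset.sum_mul,
        hpart x hx, one_mul]
  have hosc : ∀ i j x y, v i x ≠ 0 → v j y ≠ 0 → ‖φ x y - φ (a i) (a j)‖ ≤ ε := by
    intro i j x y hx hy
    obtain ⟨hψx, -⟩ := mul_ne_zero_iff.1 hx
    obtain ⟨hψy, hξy⟩ := mul_ne_zero_iff.1 hy
    refine (hUε _ (haK i) _ x (hψU i (subset_tsupport _ ?_)) y
      ⟨hψU j (subset_tsupport _ ?_), subset_tsupport ξ hξy⟩).le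
    · exact fun h => hψx (by simp [h])
    · exact fun h => hψy (by simp [h])
  refine ⟨_, by simpa using hpd n (fun i => conj (∫ x, v i x ∂μ)) a, ?_⟩
  simpa [hnorm] using norm_integral_kernel_sub_sum_le (μ := μ) hφ hv hvK hsum a hosc

theorem IsIntegrallyPosDefKernel.isPosDefKernel [μ.IsOpenPosMeasure]
    (hφ : Continuous fun p : X × X => φ p.1 p.2) (h : IsIntegrallyPosDefKernel μ φ) :
    IsPosDefKernel φ := by
  intro n c a
  refine Complex.nonneg_of_forall_exists_nonneg_norm_sub_le (C := (∑ i, ‖c i‖) ^ 2)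
    fun ε hε => ?_
  obtain ⟨K, hK, haK⟩ := exists_compact_superset (finite_range a).isCompact
  obtain ⟨U, hU, hUε⟩ := exists_nhds_norm_kernel_sub_lt hφ hK hε
  choose ψ hψ hψK hψ0 hψU hψ1 using fun i =>
    ((hU (a i)).1.inter isOpen_interior).exists_continuous_integral_eq_one (μ := μ)
      ⟨(hU (a i)).2, haK (mem_range_self i)⟩
  set v : Fin n → X → ℂ := fun j y => conj (c j) * ψ j y
  have hv : ∀ j, Continuous (v j) := fun j => by fun_prop
  have hvK : ∀ j, HasCompactSupport (v j) := fun j =>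
    ((hψK j).comp_left Complex.ofReal_zero).mul_left
  have hint : ∀ j, ∫ y, v j y ∂μ = conj (c j) := fun j => by
    simp only [v]
    rw [integral_const_mul, integral_complex_ofReal, hψ1 j, Complex.ofReal_one, mul_one]
  have hnorm : ∀ j, ∫ y, ‖v j y‖ ∂μ = ‖c j‖ := fun j => by
    simp_rw [v, norm_mul, Complex.norm_real, Real.norm_of_nonneg (hψ0 j _), RCLike.norm_conj]
    rw [integral_const_mul, hψ1 j, mul_one]
  have hsupp : ∀ j y, v j y ≠ 0 → y ∈ U (a j) ∩ interior K := fun j y hy =>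
    hψU j (fun h => hy (by simp [v, h]))
  have hosc : ∀ i j x y, v i x ≠ 0 → v j y ≠ 0 → ‖φ x y - φ (a i) (a j)‖ ≤ ε :=
    fun i j x y hx hy => (hUε _ (interior_subset (haK (mem_range_self i))) _ x (hsupp i x hx).1 y
      ⟨(hsupp j y hy).1, interior_subset (hsupp j y hy).2⟩).le
  have hξK : HasCompactSupport fun y => ∑ j, v j y := by
    refine HasCompactSupport.intro hK fun y hy => Finset.sum_eq_zero fun j _ => ?_
    by_contra hvy
    exact hy (interior_subset (hsupp j y hvy).2)
  refine ⟨_, h _ (continuous_finsetSum _ fun j _ => hv j) hξK, ?_⟩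
  rw [norm_sub_rev]
  simpa [hint, hnorm] using
    norm_integral_kernel_sub_sum_le (μ := μ) hφ hv hvK (fun _ => rfl) a hosc

end PosDef

/-- A continuous function `φ` on a locally compact Hausdorff space equipped with a Radon
measure of full support is a positive definite kernel if and only if
`∫∫ φ(x,y) conj(ξ x) ξ y ≥ 0` for every continuous compactly supported `ξ`. -/
theorem continuous_posDefKernel_iff_integrally_pos
    {X : Type*} [TopologicalSpace X] [LocallyCompactSpace X] [T2Space X]
    [MeasurableSpace X] [BorelSpace X] (μ : Measure X) [μ.Regular]
    (hsupp : ∀ U : Set X, IsOpen U → U.Nonempty → 0 < μ U)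
    (φ : X → X → ℂ) (hφ : Continuous fun p : X × X => φ p.1 p.2) :
    (∀ (n : ℕ) (c : Fin n → ℂ) (x : Fin n → X),
        (∑ i, ∑ j, c i * starRingEnd ℂ (c j) * φ (x i) (x j)).im = 0 ∧
        0 ≤ (∑ i, ∑ j, c i * starRingEnd ℂ (c j) * φ (x i) (x j)).re) ↔
    (∀ ξ : X → ℂ, Continuous ξ → HasCompactSupport ξ →
        (∫ x, ∫ y, φ x y * starRingEnd ℂ (ξ x) * ξ y ∂μ ∂μ).im = 0 ∧
        0 ≤ (∫ x, ∫ y, φ x y * starRingEnd ℂ (ξ x) * ξ y ∂μ ∂μ).re) := by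
  have : μ.IsOpenPosMeasure := ⟨fun U hU hne => (hsupp U hU hne).ne'⟩
  have key : IsPosDefKernel φ ↔ IsIntegrallyPosDefKernel μ φ :=
    ⟨fun h => h.isIntegrallyPosDefKernel hφ, fun h => h.isPosDefKernel hφ⟩
  have hnonneg : ∀ z : ℂ, 0 ≤ z ↔ z.im = 0 ∧ 0 ≤ z.re := fun z => by
    rw [Complex.nonneg_iff, eq_comm, and_comm]
  simpa only [IsPosDefKernel, IsIntegrallyPosDefKernel, hnonneg] using key
end

section
/- Let H be a complex Hilbert space and let X be a measurable space. Let α : X → H be a function and define φ : X × X → ℂ by φ(x, y) = ⟪α x, α y⟫. If φ is measurable with respect to the product σ-algebra on X × X, then α is weakly measurable, i.e. for every h ∈ H the function X → ℂ, x ↦ ⟪α x, h⟫ is measurable. -/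
/-!
The vectors `v` for which `x ↦ ⟪α x, v⟫` is measurable form a submodule, closed because pointwise
limits of measurable functions are measurable. It contains `range α` by measurability of the
kernel, hence the closed span `K` of `range α`, and trivially `Kᗮ`, on which these functions
vanish. Since `K ⊔ Kᗮ` is the whole Hilbert space, every direction is measurable.
-/

open scoped InnerProductSpace

section
variable (𝕜 : Type*) {E X : Type*} [RCLike 𝕜] [NormedAddCommGroup E] [InnerProductSpace 𝕜 E]
  [MeasurableSpace X]

def weaklyMeasurableDirections (α : X → E) : Submodule 𝕜 E where
  carrier := {v | Measurable fun x => ⟪α x, v⟫_𝕜}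
  zero_mem' := by
    show Measurable fun x => ⟪α x, 0⟫_𝕜
    simpa only [inner_zero_right] using measurable_const
  add_mem' {v w} hv hw := by
    show Measurable fun x => ⟪α x, v + w⟫_𝕜
    simp only [inner_add_right]
    exact hv.add hw
  smul_mem' c v hv := by
    show Measurable fun x => ⟪α x, c • v⟫_𝕜
    simpa only [inner_smul_right] using hv.const_mul c

variable {𝕜}

theorem mem_weaklyMeasurableDirections {α : X → E} {v : E} :
    v ∈ weaklyMeasurableDirections 𝕜 α ↔ Measurable fun x => ⟪α x, v⟫_𝕜 :=
  Iff.rfl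

theorem isClosed_weaklyMeasurableDirections (α : X → E) :
    IsClosed (weaklyMeasurableDirections 𝕜 α : Set E) := by
  refine isClosed_of_closure_subset fun v hv => ?_
  obtain ⟨u, hu, hlim⟩ := mem_closure_iff_seq_limit.mp hv
  refine measurable_of_tendsto_metrizable (f := fun n x => ⟪α x, u n⟫_𝕜) hu ?_
  exact tendsto_pi_nhds.mpr fun x => ((innerSL 𝕜 (α x)).continuous.tendsto v).comp hlim

theorem orthogonal_span_range_le_weaklyMeasurableDirections (α : X → E) :
    (Submodule.span 𝕜 (Set.range α))ᗮ ≤ weaklyMeasurableDirections 𝕜 α := fun v hv => by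
  have : (fun x => ⟪α x, v⟫_𝕜) = fun _ => 0 := funext fun x =>
    Submodule.inner_right_of_mem_orthogonal (Submodule.subset_span (Set.mem_range_self x)) hv
  rw [mem_weaklyMeasurableDirections, this]
  exact measurable_const

theorem weaklyMeasurableDirections_eq_top_of_range_subset [CompleteSpace E] {α : X → E}
    (hα : Set.range α ⊆ weaklyMeasurableDirections 𝕜 α) :
    weaklyMeasurableDirections 𝕜 α = ⊤ := by
  set K := Submodule.span 𝕜 (Set.range α)
  have hclosure : Kᗮᗮ ≤ weaklyMeasurableDirections 𝕜 α := by
    rw [Submodule.orthogonal_orthogonal_eq_closure]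
    exact K.topologicalClosure_minimal (Submodule.span_le.mpr hα)
      (isClosed_weaklyMeasurableDirections α)
  rw [eq_top_iff, ← Kᗮ.sup_orthogonal_of_hasOrthogonalProjection]
  exact sup_le (orthogonal_span_range_le_weaklyMeasurableDirections α) hclosure

end

/-- If `α : X → H` is a map into a complex Hilbert space such that the kernel
`(x, y) ↦ ⟪α x, α y⟫` is measurable on `X × X`, then `α` is weakly measurable. -/
theorem weak_measurable_of_measurable_kernel
    {H : Type*} [NormedAddCommGroup H] [InnerProductSpace ℂ H] [CompleteSpace H]
    {X : Type*} [MeasurableSpace X] (α : X → H)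
    (hφ : Measurable fun p : X × X => (inner ℂ (α p.1) (α p.2) : ℂ)) :
    ∀ h : H, Measurable fun x : X => (inner ℂ (α x) h : ℂ) := by
  have hrange : Set.range α ⊆ weaklyMeasurableDirections ℂ α := by
    rintro _ ⟨y, rfl⟩
    exact hφ.comp (measurable_id.prodMk measurable_const)
  intro h
  rw [← mem_weaklyMeasurableDirections, weaklyMeasurableDirections_eq_top_of_range_subset hrange]
  exact Submodule.mem_top
end

section
/- Let X be a measurable space and let ψ : X × X → ℝ be a measurable function such that ψ(x, y) = ψ(y, x) for all x, y, ψ(x, x) = 0 for all x ∈ X, and for every n ∈ ℕ, every c : Fin n → ℝ with ∑ i, c i = 0 and every x : Fin n → X one has ∑_{i,j} c i * c j * ψ (x i) (x j) ≤ 0. Then there exist a real Hilbert space H (a complete real inner product space) and a map α : X → H such that for every h ∈ H the function x ↦ ⟪α x, h⟫ is measurable, and ψ(x, y) = ‖α x − α y‖² for all x, y ∈ X. -/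
/-!
Fix a base point `o` and put `K(x, y) = (ψ(x, o) + ψ(o, y) - ψ(x, y)) / 2`. On finitely supported
functions, the form `⟪f, g⟫ = ∑ f x g y K x y` has `δ_o` in its radical, and on functions of total
mass zero it is `-½ ∑ f x f y ψ x y`. Replacing `f` by `f - (∑ f) δ_o` therefore shows that negative
definiteness of `ψ` makes it positive semidefinite. Completing gives a Hilbert space in which
`‖δ_x - δ_y‖² = ψ(x, y)`, and `⟪δ_x, f⟫` is a finite combination of the measurable functions
`ψ(·, y)`; weak measurability follows by density.

To land in `Type`, `ψ` is first factored through a map `X → ℕ → Bool`: the preimages under `ψ`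
of a countable generating family of Borel sets all lie in the product of the σ-algebra generated
by countably many sets `T n ⊆ X`, so `ψ x y` only depends on which `T n` contain `x` and `y`.
-/

open MeasureTheory MeasurableSpace Set UniformSpace Finsupp
open scoped InnerProductSpace

universe u

theorem MeasurableSpace.prod_mono {α β : Type*} {m₁ m₁' : MeasurableSpace α}
    {m₂ m₂' : MeasurableSpace β} (h₁ : m₁ ≤ m₁') (h₂ : m₂ ≤ m₂') : m₁.prod m₂ ≤ m₁'.prod m₂' :=
  sup_le_sup (comap_mono h₁) (comap_mono h₂)

theorem MeasurableSet.exists_countable_generateFrom_prod {α β : Type*} [MeasurableSpace α]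
    [MeasurableSpace β] {S : Set (α × β)} (hS : MeasurableSet S) :
    ∃ C : Set (Set α), C.Countable ∧ ∃ D : Set (Set β), D.Countable ∧
      MeasurableSet[(generateFrom C).prod (generateFrom D)] S := by
  have hS' := measurableSet_sup.mp hS
  clear hS
  induction hS' with
  | basic s hs =>
    rcases hs with ⟨t, -, rfl⟩ | ⟨t, -, rfl⟩
    · exact ⟨{t}, countable_singleton t, ∅, countable_empty,
        le_sup_left (a := MeasurableSpace.comap Prod.fst _) _
          ⟨t, measurableSet_generateFrom rfl, rfl⟩⟩
    · exact ⟨∅, countable_empty, {t}, countable_singleton t,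
        le_sup_right (a := MeasurableSpace.comap Prod.fst _) _
          ⟨t, measurableSet_generateFrom rfl, rfl⟩⟩
  | empty => exact ⟨∅, countable_empty, ∅, countable_empty, measurableSet_empty _⟩
  | compl t _ ih =>
    obtain ⟨C, hC, D, hD, ht⟩ := ih
    exact ⟨C, hC, D, hD, ht.compl⟩
  | iUnion f _ ih =>
    choose C hC D hD hf using ih
    exact ⟨⋃ n, C n, countable_iUnion hC, ⋃ n, D n, countable_iUnion hD,
      .iUnion fun n => prod_mono (generateFrom_mono (subset_iUnion C n))
        (generateFrom_mono (subset_iUnion D n)) _ (hf n)⟩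

theorem Set.Countable.exists_generateFrom_le_comap {α : Type*} {C : Set (Set α)}
    (hC : C.Countable) : ∃ e : α → ℕ → Bool, generateFrom C ≤ (⊤ : MeasurableSpace _).comap e := by
  classical
  obtain ⟨T, hT⟩ := countable_iff_exists_subset_range.mp hC
  refine ⟨fun x n => decide (x ∈ T n), generateFrom_le fun s hs => ?_⟩
  obtain ⟨n, rfl⟩ := hT hs
  exact ⟨{p | p n}, trivial, by ext; simp⟩

theorem Measurable.exists_factorsThrough_prodMap {α Z : Type*} [MeasurableSpace α]
    [MeasurableSpace Z] [CountablyGenerated Z] [MeasurableSingletonClass Z] {f : α × α → Z}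
    (hf : Measurable f) : ∃ e : α → ℕ → Bool, f.FactorsThrough (Prod.map e e) := by
  let G := countableGeneratingSet Z
  choose C hC D hD hCD using fun t : G =>
    (hf (measurableSet_countableGeneratingSet t.2)).exists_countable_generateFrom_prod
  have : Countable G := countable_countableGeneratingSet.to_subtype
  obtain ⟨e, he⟩ := (countable_iUnion fun t => (hC t).union (hD t)).exists_generateFrom_le_comap
  have hgen {s : Set (Set α)} (hs : s ⊆ ⋃ t, C t ∪ D t) :
      generateFrom s ≤ (⊤ : MeasurableSpace _).comap e :=
    (generateFrom_mono hs).trans he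
  have hle (t : G) : (generateFrom (C t)).prod (generateFrom (D t)) ≤
      (⊤ : MeasurableSpace ((ℕ → Bool) × (ℕ → Bool))).comap (Prod.map e e) :=
    calc (generateFrom (C t)).prod (generateFrom (D t))
        ≤ ((⊤ : MeasurableSpace _).comap e).prod ((⊤ : MeasurableSpace _).comap e) :=
          prod_mono (hgen (subset_union_left.trans (subset_iUnion_of_subset t le_rfl)))
            (hgen (subset_union_right.trans (subset_iUnion_of_subset t le_rfl)))
      _ = ((⊤ : MeasurableSpace _).prod ⊤).comap (Prod.map e e) := (comap_prodMap e e).symm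
      _ ≤ (⊤ : MeasurableSpace _).comap (Prod.map e e) := comap_mono le_top
  have hfe := @measurable_generateFrom _ _ (.comap (Prod.map e e) ⊤) G f
    fun t ht => hle ⟨t, ht⟩ _ (hCD ⟨t, ht⟩)
  rw [generateFrom_countableGeneratingSet] at hfe
  exact ⟨e, @Measurable.factorsThrough _ _ _ ⊤ _ _ _ _ hfe⟩

namespace LinearMap.BilinForm

variable {V : Type u} [AddCommGroup V] [Module ℝ V] {B : LinearMap.BilinForm ℝ V}

abbrev IsPosSemidef.preInnerProductCore (hB : B.IsPosSemidef) : PreInnerProductSpace.Core ℝ V where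
  inner f g := B f g
  conj_inner_symm f g := hB.isSymm.eq g f
  re_inner_nonneg f := hB.isNonneg.nonneg f
  add_left f g h := by simp
  smul_left f g r := by simp

theorem IsPosSemidef.exists_denseRange_inner_eq (hB : B.IsPosSemidef) :
    ∃ (H : Type u) (_ : NormedAddCommGroup H) (_ : InnerProductSpace ℝ H) (_ : CompleteSpace H)
      (j : V →ₗ[ℝ] H), DenseRange j ∧ ∀ f g, ⟪j f, j g⟫_ℝ = B f g := by
  let : SeminormedAddCommGroup V :=
    InnerProductSpace.Core.toSeminormedAddCommGroup (c := hB.preInnerProductCore)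
  let : InnerProductSpace ℝ V := InnerProductSpace.ofCore hB.preInnerProductCore
  exact ⟨Completion V, inferInstance, inferInstance, inferInstance,
    Completion.toComplₗᵢ.toLinearMap, Completion.denseRange_coe, Completion.inner_coe⟩

end LinearMap.BilinForm

theorem measurable_inner_of_denseRange {X ι H : Type*} [MeasurableSpace X]
    [NormedAddCommGroup H] [InnerProductSpace ℝ H] {α : X → H} {j : ι → H} (hj : DenseRange j)
    (hα : ∀ i, Measurable fun x => ⟪α x, j i⟫_ℝ) (h : H) :
    Measurable fun x => ⟪α x, h⟫_ℝ := by
  obtain ⟨s, hs, hlim⟩ := mem_closure_iff_seq_limit.mp (hj h)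
  choose i hi using hs
  refine measurable_of_tendsto_metrizable (f := fun n x => ⟪α x, s n⟫_ℝ) (fun n => ?_) ?_
  · simpa only [← hi n] using hα (i n)
  · exact tendsto_pi_nhds.2 fun x => tendsto_const_nhds.inner hlim

section Kernels

variable {Y : Type*}

def ConditionallyNegativeDefinite (φ : Y → Y → ℝ) : Prop :=
  ∀ (n : ℕ) (c : Fin n → ℝ), (∑ i, c i) = 0 → ∀ x : Fin n → Y,
    ∑ i, ∑ j, c i * c j * φ (x i) (x j) ≤ 0

theorem ConditionallyNegativeDefinite.of_comp_surjective {X : Type*} {φ : Y → Y → ℝ}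
    {e : X → Y} (he : Function.Surjective e)
    (hφ : ConditionallyNegativeDefinite fun x y => φ (e x) (e y)) :
    ConditionallyNegativeDefinite φ := fun n c hc x => by
  simpa only [Function.comp_apply, Function.surjInv_eq he] using hφ n c hc (Function.surjInv he ∘ x)

section KernelForm

variable {R : Type*} [CommSemiring R] (φ : Y → Y → R)

noncomputable def kernelForm : LinearMap.BilinForm R (Y →₀ R) :=
  linearCombination R fun x => linearCombination R (φ x)

variable (R) in
noncomputable def totalMass : (Y →₀ R) →ₗ[R] R :=
  linearCombination R 1

@[simp]
theorem kernelForm_single_single (x y : Y) (a b : R) :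
    kernelForm φ (single x a) (single y b) = a * b * φ x y := by
  simp [kernelForm, mul_comm, mul_left_comm]

theorem kernelForm_apply (f g : Y →₀ R) :
    kernelForm φ f g = ∑ x ∈ f.support, ∑ y ∈ g.support, f x * g y * φ x y := by
  simp [kernelForm, linearCombination_apply, Finsupp.sum, Finset.mul_sum, mul_comm, mul_left_comm]

theorem kernelForm_single_left (w : Y) (g : Y →₀ R) :
    kernelForm φ (single w 1) g = ∑ y ∈ g.support, g y * φ w y := by
  rw [kernelForm, linearCombination_single, one_smul, linearCombination_apply]
  rfl

theorem isSymm_kernelForm (hφ : ∀ x y, φ x y = φ y x) : (kernelForm φ).IsSymm := by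
  refine ⟨fun f g => ?_⟩
  rw [← LinearMap.flip_apply (kernelForm φ)]
  congr 2
  refine Finsupp.lhom_ext fun x a => Finsupp.lhom_ext fun y b => ?_
  simp [hφ x y, mul_comm]

end KernelForm

theorem ConditionallyNegativeDefinite.kernelForm_self_nonpos {φ : Y → Y → ℝ}
    (hφ : ConditionallyNegativeDefinite φ) {f : Y →₀ ℝ} (hf : totalMass ℝ f = 0) :
    kernelForm φ f f ≤ 0 := by
  classical
  let e := f.support.equivFin
  have hsum (g : Y → ℝ) : ∑ i, g (e.symm i) = ∑ y ∈ f.support, g y := by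
    rw [e.symm.sum_comp (fun y : f.support => g y), Finset.sum_coe_sort]
  have := hφ _ (fun i => f (e.symm i)) ?_ (fun i => e.symm i)
  · simpa only [kernelForm_apply, ← hsum] using this
  · simpa [totalMass, linearCombination_apply, Finsupp.sum, hsum] using hf

section CenteredForm

variable (φ : Y → Y → ℝ) (o : Y)

noncomputable def centeredForm : LinearMap.BilinForm ℝ (Y →₀ ℝ) :=
  (2⁻¹ : ℝ) • (LinearMap.BilinForm.linMulLin ((kernelForm φ).flip (single o 1)) (totalMass ℝ) +
    LinearMap.BilinForm.linMulLin (totalMass ℝ) (kernelForm φ (single o 1)) - kernelForm φ)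

theorem centeredForm_apply (f g : Y →₀ ℝ) :
    centeredForm φ o f g = (kernelForm φ f (single o 1) * totalMass ℝ g +
      totalMass ℝ f * kernelForm φ (single o 1) g - kernelForm φ f g) / 2 := by
  simp only [centeredForm, LinearMap.smul_apply, LinearMap.sub_apply, LinearMap.add_apply,
    LinearMap.BilinForm.linMulLin_apply, LinearMap.BilinForm.flip_apply, smul_eq_mul]
  ring

theorem centeredForm_self_of_totalMass_eq_zero {f : Y →₀ ℝ} (hf : totalMass ℝ f = 0) :
    centeredForm φ o f f = -kernelForm φ f f / 2 := by
  rw [centeredForm_apply, hf]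
  ring

theorem centeredForm_sub_single (hsymm : ∀ x y, φ x y = φ y x) (hdiag : ∀ x, φ x x = 0)
    (u v : Y) :
    centeredForm φ o (single u 1 - single v 1) (single u 1 - single v 1) = φ u v := by
  rw [centeredForm_self_of_totalMass_eq_zero _ _ (by simp [totalMass])]
  simp [hdiag, hsymm v u]

theorem isPosSemidef_centeredForm (hsymm : ∀ x y, φ x y = φ y x) (hdiag : ∀ x, φ x x = 0)
    (hneg : ConditionallyNegativeDefinite φ) : (centeredForm φ o).IsPosSemidef := by
  have hK := isSymm_kernelForm φ hsymm
  refine ⟨⟨fun f g => ?_⟩, ⟨fun f => ?_⟩⟩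
  · rw [centeredForm_apply, centeredForm_apply, hK.eq f g, hK.eq f, hK.eq (single o 1) g]
    ring
  · have hoLeft (g) : centeredForm φ o (single o 1) g = 0 := by
      simp [centeredForm_apply, totalMass, hdiag]
    have hoRight (g) : centeredForm φ o g (single o 1) = 0 := by
      simp [centeredForm_apply, totalMass, hdiag, hK.eq g]
    set g := f - totalMass ℝ f • single o 1
    have hg : totalMass ℝ g = 0 := by simp [g, totalMass]
    calc 0 ≤ -kernelForm φ g g / 2 := by linarith [hneg.kernelForm_self_nonpos hg]
      _ = centeredForm φ o g g := (centeredForm_self_of_totalMass_eq_zero φ o hg).symm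
      _ = centeredForm φ o f f := by
        simp only [g, map_sub, map_smul, LinearMap.sub_apply, LinearMap.smul_apply, hoLeft,
          hoRight, smul_zero, sub_zero]

theorem measurable_centeredForm_single {X : Type*} [MeasurableSpace X] {e : X → Y}
    (he : ∀ y, Measurable fun x => φ (e x) y) (f : Y →₀ ℝ) :
    Measurable fun x => centeredForm φ o (single (e x) 1) f := by
  simp only [centeredForm_apply, kernelForm_single_single, kernelForm_single_left, totalMass,
    linearCombination_single, Pi.one_apply, smul_eq_mul, one_mul, mul_one]
  exact ((((he o).mul_const _).add_const _).sub
    (Finset.measurable_sum _ fun y _ => (he y).const_mul _)).div_const 2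

end CenteredForm

end Kernels

theorem ConditionallyNegativeDefinite.exists_hilbert {X : Type*} [MeasurableSpace X]
    {Y : Type u} [Nonempty Y] {φ : Y → Y → ℝ} (hneg : ConditionallyNegativeDefinite φ)
    (hsymm : ∀ x y, φ x y = φ y x) (hdiag : ∀ x, φ x x = 0) {e : X → Y}
    (he : ∀ y, Measurable fun x => φ (e x) y) :
    ∃ (H : Type u) (_ : NormedAddCommGroup H) (_ : InnerProductSpace ℝ H) (_ : CompleteSpace H)
      (β : Y → H), (∀ h : H, Measurable fun x => ⟪β (e x), h⟫_ℝ) ∧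
        ∀ u v, φ u v = ‖β u - β v‖ ^ 2 := by
  obtain ⟨o⟩ := ‹Nonempty Y›
  obtain ⟨H, _, _, _, j, hj, hinner⟩ :=
    (isPosSemidef_centeredForm φ o hsymm hdiag hneg).exists_denseRange_inner_eq
  refine ⟨H, inferInstance, inferInstance, inferInstance, fun y => j (single y 1),
    measurable_inner_of_denseRange hj fun f => ?_, fun u v => ?_⟩
  · simpa only [hinner] using measurable_centeredForm_single φ o he f
  · rw [← map_sub, ← real_inner_self_eq_norm_sq, hinner, centeredForm_sub_single φ o hsymm hdiag]

/-- A measurable real-valued negative definite kernel vanishing on the diagonal is of the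
form `ψ(x,y) = ‖α x - α y‖²` for some real Hilbert space `H` and some weakly measurable
map `α : X → H`. -/
theorem exists_hilbert_weakMeasurable_of_negDefKernel
    {X : Type*} [MeasurableSpace X] (ψ : X → X → ℝ)
    (hmeas : Measurable fun p : X × X => ψ p.1 p.2)
    (hsymm : ∀ x y : X, ψ x y = ψ y x)
    (hdiag : ∀ x : X, ψ x x = 0)
    (hneg : ∀ (n : ℕ) (c : Fin n → ℝ), (∑ i, c i) = 0 → ∀ x : Fin n → X,
      ∑ i, ∑ j, c i * c j * ψ (x i) (x j) ≤ 0) :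
    ∃ (H : Type) (_ : NormedAddCommGroup H) (_ : InnerProductSpace ℝ H)
      (_ : CompleteSpace H) (α : X → H),
      (∀ h : H, Measurable fun x : X => (inner ℝ (α x) h : ℝ)) ∧
      ∀ x y : X, ψ x y = ‖α x - α y‖ ^ 2 := by
  rcases isEmpty_or_nonempty X with hX | hX
  · exact ⟨ℝ, inferInstance, inferInstance, inferInstance, fun _ => 0, fun _ => measurable_const,
      isEmptyElim⟩
  obtain ⟨e, he⟩ := hmeas.exists_factorsThrough_prodMap
  have hq := rangeFactorization_surjective (f := e)
  let φ : range e → range e → ℝ :=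
    fun u v => Function.extend (Prod.map e e) (fun p : X × X => ψ p.1 p.2) 0 (u, v)
  have hφ (x y : X) : φ (rangeFactorization e x) (rangeFactorization e y) = ψ x y :=
    he.extend_apply 0 (x, y)
  obtain ⟨H, _, _, _, β, hβ, hβφ⟩ :=
    ConditionallyNegativeDefinite.exists_hilbert (φ := φ) (e := rangeFactorization e)
      (.of_comp_surjective hq (funext₂ hφ ▸ hneg))
      (hq.forall₂.2 fun x y => by rw [hφ, hφ, hsymm])
      (hq.forall.2 fun x => by rw [hφ, hdiag])
      (hq.forall.2 fun y => by simp only [hφ]; exact hmeas.comp measurable_prodMk_right)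
  exact ⟨H, inferInstance, inferInstance, inferInstance, β ∘ rangeFactorization e, hβ,
    fun x y => by rw [← hφ, hβφ]; rfl⟩
end

section
/- Let X be a set, H a real Hilbert space, α : X → H a map, and t ≥ 0 a real number. Then the function φ_t : X × X → ℂ defined by φ_t(x, y) = exp(−t · ‖α x − α y‖²) is a positive definite kernel, i.e. for every n ∈ ℕ, every c : Fin n → ℂ and every x : Fin n → X, the sum ∑_{i,j} c i * conj (c j) * exp(−t · ‖α (x i) − α (x j)‖²) is a nonnegative real number. -/
/-!
Expanding `‖a i - a j‖²`, the kernel matrix `exp (-t ‖a i - a j‖²)` is the Hadamard product of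
the rank-one matrix `d dᵀ`, with `d i = exp (-t ‖a i‖²)`, and the entrywise exponential of the
Gram matrix `G = 2t ⟪a i, a j⟫`. That exponential is the limit of the partial sums of
`∑ₖ (k!)⁻¹ G^{⊙k}`, which are positive semidefinite by Schur's product theorem, and the positive
semidefinite cone is closed.
-/

open scoped ComplexOrder ComplexConjugate MatrixOrder Nat

namespace Matrix

variable {n 𝕜 : Type*} [RCLike 𝕜]

theorem isClosed_setOf_posSemidef [Fintype n] : IsClosed {A : Matrix n n 𝕜 | A.PosSemidef} := by
  simp_rw [posSemidef_iff_dotProduct_mulVec, Set.ofPred_and, Set.ofPred_forall]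
  refine (isClosed_eq continuous_id.matrix_conjTranspose continuous_id).inter
    (isClosed_iInter fun x => isClosed_le continuous_const ?_)
  fun_prop

theorem PosSemidef.map_pow [Finite n] {A : Matrix n n 𝕜} (hA : A.PosSemidef) (k : ℕ) :
    (A.map (· ^ k)).PosSemidef := by
  induction k with
  | zero =>
    have hzero : A.map (· ^ 0) = vecMulVec 1 (star 1) := by ext; simp [vecMulVec]
    exact hzero ▸ posSemidef_vecMulVec_self_star 1
  | succ k ih =>
    have hsucc : A.map (· ^ (k + 1)) = A.map (· ^ k) ⊙ A := by ext; simp [pow_succ]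
    exact hsucc ▸ ih.hadamard hA

theorem PosSemidef.map_exp [Fintype n] {A : Matrix n n 𝕜} (hA : A.PosSemidef) :
    (A.map NormedSpace.exp).PosSemidef := by
  have hsum : HasSum (fun k : ℕ => (k ! : ℝ)⁻¹ • A.map (· ^ k)) (A.map NormedSpace.exp) :=
    Pi.hasSum.mpr fun i => Pi.hasSum.mpr fun j => by
      simpa [div_eq_inv_mul, RCLike.real_smul_eq_coe_mul] using
        NormedSpace.expSeries_div_hasSum_exp (A i j)
  exact isClosed_setOf_posSemidef.mem_of_tendsto hsum <| .of_forall fun s =>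
    posSemidef_sum s fun k _ => (hA.map_pow k).smul (by positivity)

theorem PosSemidef.sum_mul_conj_mul_nonneg [Fintype n] {A : Matrix n n 𝕜} (hA : A.PosSemidef)
    (c : n → 𝕜) : 0 ≤ ∑ i, ∑ j, c i * conj (c j) * A i j := by
  simpa [dotProduct, mulVec, Finset.mul_sum, mul_comm, mul_left_comm, mul_assoc] using
    hA.dotProduct_mulVec_nonneg (star c)

theorem PosSemidef.map_ofReal [Fintype n] {A : Matrix n n ℝ} (hA : A.PosSemidef) :
    (A.map ((↑) : ℝ → 𝕜)).PosSemidef := by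
  classical
  obtain ⟨B, rfl⟩ : ∃ B : Matrix n n ℝ, A = Bᴴ * B :=
    ⟨CFC.sqrt A, by
      rw [← star_eq_conjTranspose, (CFC.sqrt_nonneg A).isSelfAdjoint.star_eq,
        CFC.sqrt_mul_sqrt_self A hA.nonneg]⟩
  rw [Matrix.map_mul (f := algebraMap ℝ 𝕜), conjTranspose_map _ (fun x => by simp)]
  exact posSemidef_conjTranspose_mul_self _

theorem posSemidef_exp_neg_mul_norm_sub_sq {E : Type*} [SeminormedAddCommGroup E]
    [InnerProductSpace ℝ E] [Fintype n] (a : n → E) {t : ℝ} (ht : 0 ≤ t) :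
    (of fun i j => Real.exp (-(t * ‖a i - a j‖ ^ 2))).PosSemidef := by
  set d : n → ℝ := fun i => Real.exp (-(t * ‖a i‖ ^ 2))
  have hfactor : of (fun i j => Real.exp (-(t * ‖a i - a j‖ ^ 2)))
      = vecMulVec d (star d) ⊙ ((2 * t) • gram ℝ a).map Real.exp := by
    ext i j
    simp only [of_apply, hadamard_apply, vecMulVec_apply, map_apply, smul_apply, gram_apply,
      star_trivial, d, ← Real.exp_add, norm_sub_sq_real, smul_eq_mul]
    ring_nf
  rw [hfactor, Real.exp_eq_exp_ℝ]
  exact (posSemidef_vecMulVec_self_star d).hadamard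
    ((posSemidef_gram ℝ a).smul (by positivity)).map_exp

end Matrix

theorem posDefKernel_exp_neg_sq_dist_general
    {X : Type*} {H : Type*} [NormedAddCommGroup H] [InnerProductSpace ℝ H]
    (α : X → H) (t : ℝ) (ht : 0 ≤ t) :
    ∀ (n : ℕ) (c : Fin n → ℂ) (x : Fin n → X),
      (∑ i, ∑ j, c i * starRingEnd ℂ (c j)
        * Complex.exp (-((t * ‖α (x i) - α (x j)‖ ^ 2 : ℝ) : ℂ))).im = 0 ∧
      0 ≤ (∑ i, ∑ j, c i * starRingEnd ℂ (c j)
        * Complex.exp (-((t * ‖α (x i) - α (x j)‖ ^ 2 : ℝ) : ℂ))).re := by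
  intro n c x
  have hK := (Matrix.posSemidef_exp_neg_mul_norm_sub_sq (α ∘ x) ht).map_ofReal (𝕜 := ℂ)
  obtain ⟨hre, him⟩ := Complex.nonneg_iff.mp (hK.sum_mul_conj_mul_nonneg c)
  simp_rw [← Complex.ofReal_neg, ← Complex.ofReal_exp]
  exact ⟨him.symm, hre⟩

/-- For a map `α : X → H` into a real Hilbert space and `t ≥ 0`, the function
`φ_t(x,y) = exp (-t ‖α x - α y‖²)` is a positive definite kernel on `X × X`. -/
theorem posDefKernel_exp_neg_sq_dist
    {X : Type*} {H : Type*} [NormedAddCommGroup H] [InnerProductSpace ℝ H]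
    [CompleteSpace H] (α : X → H) (t : ℝ) (ht : 0 ≤ t) :
    ∀ (n : ℕ) (c : Fin n → ℂ) (x : Fin n → X),
      (∑ i, ∑ j, c i * starRingEnd ℂ (c j)
        * Complex.exp (-((t * ‖α (x i) - α (x j)‖ ^ 2 : ℝ) : ℂ))).im = 0 ∧
      0 ≤ (∑ i, ∑ j, c i * starRingEnd ℂ (c j)
        * Complex.exp (-((t * ‖α (x i) - α (x j)‖ ^ 2 : ℝ) : ℂ))).re :=
  posDefKernel_exp_neg_sq_dist_general α t ht
end
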